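/- Let n ≥ 2, N = n(n−1), and let u = [u_1, …, u_N] be a subword of λ̂_n with u_1 u_2 ⋯ u_N = e. Define the rotation u′ = rot(u) to be the subword of λ̂_n whose skip pattern is shifted cyclically by one: index i ∈ {1, …, N} is a skip of u′ if and only if index i−1 (taken cyclically, so index N when i = 1) is a skip of u. Then u′_1 u′_2 ⋯ u′_N = e. -/

import Mathlib

/-!
Conjugation by the translation `k ↦ k + 1` sends `sⱼ` to `sⱼ₊₁`, and `s_N = s₀` because
`n ∣ N`. Hence `rot(u)` is the conjugate by this translation of `[u_N, u₁, …, u_{N-1}]`,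
whose product is `u_N (u₁ ⋯ u_N) u_N⁻¹ = e`.
-/

/-- The affine reflection `((i,j))` of the affine symmetric group `W̃ₙ`, as a function
`ℤ → ℤ`: it interchanges `i + k*n` and `j + k*n` for every `k ∈ ℤ` and fixes all
integers not congruent to `i` or `j` mod `n`. -/
def affRefl (n : ℕ) (i j : ℤ) : ℤ → ℤ := fun k =>
  if (k - i) % (n : ℤ) = 0 then k - i + j
  else if (k - j) % (n : ℤ) = 0 then k - j + i
  else k

/-- `t : ℤ → ℤ` is an affine reflection of `W̃ₙ`. -/
def IsAffRefl (n : ℕ) (t : ℤ → ℤ) : Prop :=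
  ∃ i j : ℤ, (i - j) % (n : ℤ) ≠ 0 ∧ t = affRefl n i j

/-- The simple reflection `sⱼ = ((j, j+1))`. -/
def simpleRefl (n : ℕ) (j : ℤ) : ℤ → ℤ := affRefl n j (j + 1)

/-- The translation `λₙ`: it sends `k ≡ 0 (mod n)` to `k - n(n-1)` and all other `k`
to `k + n`. -/
def lam (n : ℕ) : ℤ → ℤ := fun k =>
  if k % (n : ℤ) = 0 then k - (n : ℤ) * ((n : ℤ) - 1) else k + (n : ℤ)

/-- The product `r₁ r₂ ⋯ rₘ` of a list of elements, with `(w·v)(k) = w(v(k))`. -/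
def listProd (l : List (ℤ → ℤ)) : ℤ → ℤ := l.foldr (· ∘ ·) id

/-- `l` is a factorization of `λₙ` into affine reflections. -/
def IsFactorization (n : ℕ) (l : List (ℤ → ℤ)) : Prop :=
  (∀ t ∈ l, IsAffRefl n t) ∧ listProd l = lam n

/-- A tree-like factorization of `λₙ`: a factorization `[r₁, …, r_{2n-2}]` into `2n-2`
affine reflections such that there are integers `a₀, …, a_{2n-2}` and `b₁, …, b_{2n-2}`
with `r_k = ((a_{k-1}, b_k))`, `a_{k-1} < b_k` and `a_k ≡ b_k (mod n)`
(0-based: `r` at index `k` equals `((a k, b (k+1)))`). -/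
def IsTreeLike (n : ℕ) (l : List (ℤ → ℤ)) : Prop :=
  IsFactorization n l ∧ l.length = 2 * n - 2 ∧
  ∃ a b : ℕ → ℤ, ∀ k : ℕ, ∀ h : k < l.length,
    l.get ⟨k, h⟩ = affRefl n (a k) (b (k + 1)) ∧
    a k < b (k + 1) ∧ (a (k + 1) - b (k + 1)) % (n : ℤ) = 0

/-- `a₀ < a₁ < ⋯` is a strictly increasing endpoint sequence of the factorization `l`:
`r_ℓ = ((a_{ℓ-1}, a_ℓ))` (0-based: `r` at index `k` is `((a k, a (k+1)))`). -/
def EndSeq (n : ℕ) (l : List (ℤ → ℤ)) (a : ℕ → ℤ) : Prop :=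
  ∀ k : ℕ, ∀ h : k < l.length,
    a k < a (k + 1) ∧ l.get ⟨k, h⟩ = affRefl n (a k) (a (k + 1))

/-- The representative of `x` modulo `n` lying in `{1, …, n}`. -/
def resOne (n : ℕ) (x : ℤ) : ℤ := if x % (n : ℤ) = 0 then (n : ℤ) else x % (n : ℤ)

/-- `nb_k(r)` for the endpoint sequence `a` of a tree-like factorization of `λₙ`:
the list of the residues `a_i mod n` (representatives in `{1, …, n}`), in increasing
order of the index `i ∈ {1, …, 2n-2}`, over those `i` with `a_{i-1} ≡ k (mod n)`
(0-based: indices `i < 2n-2` with `a i ≡ k`, recording the residue of `a (i+1)`). -/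
def nb (n : ℕ) (a : ℕ → ℤ) (k : ℤ) : List ℤ :=
  ((List.range (2 * n - 2)).filter (fun i => decide ((a i - k) % (n : ℤ) = 0))).map
    (fun i => resOne n (a (i + 1)))

/-- A cyclic factorization of `λₙ`: a tree-like factorization such that, for an
endpoint sequence `a` as above, (i) `nb_n` is strictly increasing; and (ii) for each
`k ∈ {1, …, n-1}`, writing `nb_k = [c₁, …, c_ℓ]`, there is `j ∈ {1, …, ℓ}` with
`c_j < c_{j+1} < ⋯ < c_{ℓ-1} < k < c₁ < ⋯ < c_{j-1}`. -/
def IsCyclicFact (n : ℕ) (l : List (ℤ → ℤ)) : Prop :=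
  IsTreeLike n l ∧
  ∃ a : ℕ → ℤ, EndSeq n l a ∧
    List.Chain' (· < ·) (nb n a (n : ℤ)) ∧
    (∀ k : ℤ, 1 ≤ k → k ≤ (n : ℤ) - 1 →
      ∃ m : ℕ, m < (nb n a k).length ∧
        List.Chain' (· < ·)
          ((nb n a k).dropLast.drop m ++ k :: (nb n a k).dropLast.take m))

/-- The letter at (0-based) position `j` of the subword of `λ̂ₙ` with skip set `S`:
the identity `e` if `j` is a skip, and the simple reflection `sⱼ` otherwise. -/
def letterAt (n : ℕ) (S : Finset ℕ) (j : ℕ) : ℤ → ℤ :=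
  if j ∈ S then id else simpleRefl n (j : ℤ)

/-- The subword of the word `λ̂ₙ = [s₀, s₁, …, s_{n-1}]^{n-1}` (of length `N = n(n-1)`,
whose letter at 0-based position `j` is `s_j`) with skip set `S`. -/
def subword (n : ℕ) (S : Finset ℕ) : List (ℤ → ℤ) :=
  (List.range (n * (n - 1))).map (letterAt n S)

/-- `u_{(j)}`: the product of the first `j` letters of the subword. -/
def uPref (n : ℕ) (S : Finset ℕ) (j : ℕ) : ℤ → ℤ :=
  listProd ((subword n S).take j)

/-- `u_{(j)}⁻¹`: since every letter is an involution, the inverse of `u_{(j)}` is the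
product of the first `j` letters in reverse order. -/
def uPrefInv (n : ℕ) (S : Finset ℕ) (j : ℕ) : ℤ → ℤ :=
  listProd (((subword n S).take j).reverse)

/-- The element `t_{j+1} = u_{(j)} s_j u_{(j)}⁻¹` of `inv(u)` (0-based `j`). -/
def conjAt (n : ℕ) (S : Finset ℕ) (j : ℕ) : ℤ → ℤ :=
  uPref n S j ∘ simpleRefl n (j : ℤ) ∘ uPrefInv n S j

/-- The (0-based) skip indices of the subword, in increasing order. -/
def skipIdx (S : Finset ℕ) : List ℕ := S.sort (· ≤ ·)

/-- The sequence `r^u` of skip reflections of the subword with skip set `S`. -/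
def skipRefls (n : ℕ) (S : Finset ℕ) : List (ℤ → ℤ) :=
  (skipIdx S).map (conjAt n S)

/-- The subword with skip set `S` is a member of `S_n`: it is a subword of `λ̂ₙ`
with exactly `2n-2` skips whose product is the identity. -/
def SnMem (n : ℕ) (S : Finset ℕ) : Prop :=
  S ⊆ Finset.range (n * (n - 1)) ∧ S.card = 2 * n - 2 ∧ listProd (subword n S) = id

/-- The product of the suffix `r_{i+1} ⋯ r_m` (0-based: drops the first `i` factors). -/
def suffixProd (l : List (ℤ → ℤ)) (i : ℕ) : ℤ → ℤ := listProd (l.drop i)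

/-- The cyclic segment product `u_{a+1} u_{a+2} ⋯ u_{a+L}` of the subword with skip set
`S` (0-based starting position `a`, indices taken modulo `N = n(n-1)`). -/
def segProd (n : ℕ) (S : Finset ℕ) (a L : ℕ) : ℤ → ℤ :=
  listProd ((List.range L).map (fun t => letterAt n S ((a + t) % (n * (n - 1)))))

def shiftConj (f : ℤ → ℤ) : ℤ → ℤ := fun k => f (k - 1) + 1

theorem shiftConj_id : shiftConj id = id := by
  funext k
  simp [shiftConj]

theorem shiftConj_comp (f g : ℤ → ℤ) : shiftConj (f ∘ g) = shiftConj f ∘ shiftConj g := by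
  funext k
  simp [shiftConj]

theorem listProd_cons (f : ℤ → ℤ) (l : List (ℤ → ℤ)) :
    listProd (f :: l) = f ∘ listProd l :=
  rfl

theorem listProd_append (l l' : List (ℤ → ℤ)) :
    listProd (l ++ l') = listProd l ∘ listProd l' := by
  induction l with
  | nil => rfl
  | cons f l ih => rw [List.cons_append, listProd_cons, listProd_cons, ih, Function.comp_assoc]

theorem listProd_map_shiftConj (l : List (ℤ → ℤ)) :
    listProd (l.map shiftConj) = shiftConj (listProd l) := by
  induction l with
  | nil => exact shiftConj_id.symm
  | cons f l ih => rw [List.map_cons, listProd_cons, listProd_cons, ih, shiftConj_comp]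

theorem listProd_cons_eq_id {x : ℤ → ℤ} {l : List (ℤ → ℤ)} (hx : x ∘ x = id)
    (h : listProd (l ++ [x]) = id) : listProd (x :: l) = id := by
  have hlx : listProd l ∘ x = id := by rwa [listProd_append] at h
  have hl : listProd l = x := by
    rw [← Function.comp_id (listProd l), ← hx, ← Function.comp_assoc, hlx, Function.id_comp]
  rw [listProd_cons, hl, hx]

theorem shiftConj_affRefl (n : ℕ) (i j : ℤ) :
    shiftConj (affRefl n i j) = affRefl n (i + 1) (j + 1) := by
  funext k
  simp only [shiftConj, affRefl, show k - 1 - i = k - (i + 1) by ring,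
    show k - 1 - j = k - (j + 1) by ring]
  split_ifs <;> ring

theorem shiftConj_simpleRefl (n : ℕ) (j : ℤ) :
    shiftConj (simpleRefl n j) = simpleRefl n (j + 1) :=
  shiftConj_affRefl n j (j + 1)

theorem affRefl_add_mul (n : ℕ) (i j m : ℤ) :
    affRefl n (i + n * m) (j + n * m) = affRefl n i j := by
  funext k
  simp only [affRefl, show k - (i + n * m) = k - i + (-m) * n by ring,
    show k - (j + n * m) = k - j + (-m) * n by ring, Int.add_mul_emod_self_right]
  split_ifs <;> ring

theorem simpleRefl_add_mul (n : ℕ) (j m : ℤ) : simpleRefl n (j + n * m) = simpleRefl n j := by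
  rw [simpleRefl, show j + n * m + 1 = j + 1 + n * m by ring, affRefl_add_mul, simpleRefl]

theorem affRefl_comp_self {n : ℕ} {i j : ℤ} (hij : ¬ (n : ℤ) ∣ i - j) :
    affRefl n i j ∘ affRefl n i j = id := by
  have hji : ¬ (n : ℤ) ∣ j - i := by rwa [← dvd_neg, neg_sub]
  funext k
  simp only [affRefl, Function.comp_apply, id, ← Int.dvd_iff_emod_eq_zero]
  by_cases hi : (n : ℤ) ∣ k - i
  · have hj' : ¬ (n : ℤ) ∣ k - i + j - i := by
      rwa [show k - i + j - i = (k - i) + (j - i) by ring, dvd_add_right hi]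
    simp [hi, hj']
  · by_cases hj : (n : ℤ) ∣ k - j <;> simp [hi, hj]

theorem simpleRefl_comp_self {n : ℕ} (hn : 2 ≤ n) (j : ℤ) :
    simpleRefl n j ∘ simpleRefl n j = id := by
  refine affRefl_comp_self fun hdvd => ?_
  rw [show j - (j + 1) = -1 by ring, dvd_neg] at hdvd
  have := Int.le_of_dvd one_pos hdvd
  omega

theorem letterAt_comp_self {n : ℕ} (hn : 2 ≤ n) (S : Finset ℕ) (j : ℕ) :
    letterAt n S j ∘ letterAt n S j = id := by
  unfold letterAt
  split_ifs
  · rfl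
  · exact simpleRefl_comp_self hn j

theorem letterAt_succ_of_iff {n i : ℕ} {S S' : Finset ℕ} (h : i + 1 ∈ S' ↔ i ∈ S) :
    letterAt n S' (i + 1) = shiftConj (letterAt n S i) := by
  unfold letterAt
  by_cases hi : i ∈ S
  · rw [if_pos (h.mpr hi), if_pos hi, shiftConj_id]
  · rw [if_neg (mt h.mp hi), if_neg hi, shiftConj_simpleRefl]
    push_cast
    rfl

/-- The skip set of `rot(u)` when `u` has skip set `S` and `N` letters. -/
def rotSkips (N : ℕ) (S : Finset ℕ) : Finset ℕ :=
  (Finset.range N).filter (fun i => (i + (N - 1)) % N ∈ S)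

theorem succ_mem_rotSkips_iff {M i : ℕ} (S : Finset ℕ) (hi : i < M) :
    i + 1 ∈ rotSkips (M + 1) S ↔ i ∈ S := by
  rw [rotSkips, Finset.mem_filter, Finset.mem_range, Nat.add_sub_cancel,
    show i + 1 + M = i + (M + 1) by omega, Nat.add_mod_right, Nat.mod_eq_of_lt (by omega)]
  exact and_iff_right (by omega)

theorem zero_mem_rotSkips_iff (M : ℕ) (S : Finset ℕ) :
    0 ∈ rotSkips (M + 1) S ↔ M ∈ S := by
  rw [rotSkips, Finset.mem_filter, Finset.mem_range, Nat.add_sub_cancel, Nat.zero_add,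
    Nat.mod_eq_of_lt (Nat.lt_succ_self M)]
  exact and_iff_right (Nat.succ_pos M)

section Subword

variable {n M : ℕ} (S : Finset ℕ)

theorem subword_eq_append (hN : n * (n - 1) = M + 1) :
    subword n S = (List.range M).map (letterAt n S) ++ [letterAt n S M] := by
  rw [subword, hN, List.range_succ, List.map_append, List.map_singleton]

theorem letterAt_rotSkips_zero (hN : n * (n - 1) = M + 1) :
    letterAt n (rotSkips (M + 1) S) 0 = shiftConj (letterAt n S M) := by
  have hsN : simpleRefl n ((M : ℤ) + 1) = simpleRefl n 0 := by
    have hcast : ((M : ℤ) + 1) = 0 + n * ((n : ℤ) - 1) := by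
      have := congrArg (Nat.cast : ℕ → ℤ) hN
      push_cast [Nat.cast_sub (show 1 ≤ n by nlinarith)] at this
      linarith
    rw [hcast, simpleRefl_add_mul]
  unfold letterAt
  by_cases hM : M ∈ S
  · rw [if_pos ((zero_mem_rotSkips_iff M S).mpr hM), if_pos hM, shiftConj_id]
  · rw [if_neg (mt (zero_mem_rotSkips_iff M S).mp hM), if_neg hM, shiftConj_simpleRefl, hsN]
    rfl

theorem subword_rotSkips (hN : n * (n - 1) = M + 1) :
    subword n (rotSkips (M + 1) S) =
      (letterAt n S M :: (List.range M).map (letterAt n S)).map shiftConj := by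
  rw [subword, hN, List.range_succ_eq_map, List.map_cons, List.map_cons,
    letterAt_rotSkips_zero S hN, List.map_map, List.map_map]
  congr 1
  refine List.map_congr_left fun i hi => ?_
  exact letterAt_succ_of_iff (succ_mem_rotSkips_iff S (List.mem_range.mp hi))

end Subword

theorem stmt7_general (n : ℕ) (S : Finset ℕ)
    (h : listProd (subword n S) = id) :
    listProd (subword n ((Finset.range (n * (n - 1))).filter
      (fun i => (i + (n * (n - 1) - 1)) % (n * (n - 1)) ∈ S))) = id := by
  change listProd (subword n (rotSkips (n * (n - 1)) S)) = id
  rcases Nat.eq_zero_or_pos (n * (n - 1)) with hN | hN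
  · simp [subword, hN, listProd]
  obtain ⟨M, hN⟩ := Nat.exists_eq_add_one.mpr hN
  have hn : 2 ≤ n := by
    by_contra! hn
    interval_cases n <;> simp at hN
  rw [subword_eq_append S hN] at h
  rw [hN, subword_rotSkips S hN, listProd_map_shiftConj,
    listProd_cons_eq_id (letterAt_comp_self hn S M) h, shiftConj_id]

/-- The rotation of an `e`-subword of `λ̂ₙ` (the subword whose skip
pattern is cyclically shifted by one) is again an `e`-subword. -/
theorem stmt7 (n : ℕ) (hn : 2 ≤ n) (S : Finset ℕ)
    (hS : S ⊆ Finset.range (n * (n - 1)))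
    (h : listProd (subword n S) = id) :
    listProd (subword n ((Finset.range (n * (n - 1))).filter
      (fun i => (i + (n * (n - 1) - 1)) % (n * (n - 1)) ∈ S))) = id :=
  stmt7_general n S h
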